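/- arXiv:0908.1647 — 5 statements merged into one kernel-verified Lean document; each statement's English description precedes it below -/
import Mathlib

section
/- Let ω₀ : C^∞(B) → ℂ be a state (a positive linear functional with ω₀(1) = 1). Then the open time evolution (Φ_t^{ω₀})* = (id ⊗ ω₀) ∘ Ψ_t* ∘ pr_S* : C^∞(S) → C^∞(S) is a completely positive map, i.e., for every n ∈ ℕ its canonical extension to n × n matrices of functions maps elements of the form F*F to positive elements. -/
open Matrix ComplexOrder

/-- Polarization: positivity of `ω₀` implies hermitian symmetry of the
sesquilinear form `(f, h) ↦ ω₀ (star f * h)`. -/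
lemma omega_herm {B : Type*} (ω₀ : (B → ℂ) →ₗ[ℂ] ℂ)
    (him : ∀ f : B → ℂ, (ω₀ (star f * f)).im = 0) (f h : B → ℂ) :
    ω₀ (star f * h) = starRingEnd ℂ (ω₀ (star h * f)) := by
  set a := ω₀ (star f * h) with ha
  set b := ω₀ (star h * f) with hb
  have e1 : star (f + h) * (f + h)
      = star f * f + (star f * h + (star h * f + star h * h)) := by
    rw [star_add]; ring
  have e1' := him (f + h)
  rw [e1, map_add, map_add, map_add] at e1'
  simp only [Complex.add_im, him f, him h] at e1'
  -- e1' : a.im + b.im = 0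
  set c : B → ℂ := fun _ => Complex.I with hc
  have hsc : ∀ x : B → ℂ, c * x = Complex.I • x := by
    intro x; funext y; simp [hc]
  have hcs : star c = -c := by
    funext y; simp [hc, Complex.conj_I]
  have e2 : star (f + c * h) * (f + c * h)
      = star f * f + (star h * h + (c * (star f * h) + -(c * (star h * f)))) := by
    funext y
    simp only [Pi.mul_apply, Pi.add_apply, Pi.star_apply, Pi.neg_apply, hc,
      Complex.star_def, _root_.map_add, _root_.map_mul, Complex.conj_I]
    ring_nf
    rw [Complex.I_sq]
    ring
  have e2' := him (f + c * h)
  rw [e2, map_add, map_add, map_add, map_neg, hsc (star f * h), hsc (star h * f),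
    _root_.map_smul, _root_.map_smul] at e2'
  simp only [Complex.add_im, him f, him h, Complex.neg_im, smul_eq_mul,
    Complex.mul_im, Complex.I_re, Complex.I_im] at e2'
  -- e2' should give a.re - b.re = 0
  apply Complex.ext
  · simp only [Complex.conj_re]; linarith
  · simp only [Complex.conj_im]; linarith

/-- For any state `ω₀` of the bath (a normalized positive linear
functional on functions on `B`), the open time evolution
`(Φ_t^{ω₀})* = (id ⊗ ω₀) ∘ Ψ_t* ∘ pr_S*` is completely positive: every matrix
amplification maps elements of the form `Fᴴ * F` to (pointwise positive
semidefinite, i.e. positive) elements. -/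
theorem open_time_evolution_completely_positive {S B : Type*}
    (Ψ : ℝ → S × B → S × B) (t : ℝ)
    (ω₀ : (B → ℂ) →ₗ[ℂ] ℂ)
    (hpos : ∀ f : B → ℂ, (ω₀ (star f * f)).im = 0 ∧ 0 ≤ (ω₀ (star f * f)).re)
    (hstate : ω₀ 1 = 1)
    (T : (S → ℂ) → (S → ℂ))
    (hT : ∀ (f : S → ℂ) (xS : S), T f xS = ω₀ (fun xB => f (Ψ t (xS, xB)).1)) :
    ∀ (n : ℕ) (F : Matrix (Fin n) (Fin n) (S → ℂ)) (xS : S),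
      Matrix.PosSemidef (Matrix.of fun i j => T ((Fᴴ * F) i j) xS) := by
  intro n F xS
  have him : ∀ f : B → ℂ, (ω₀ (star f * f)).im = 0 := fun f => (hpos f).1
  set g : Fin n → Fin n → B → ℂ := fun k j xB => F k j (Ψ t (xS, xB)).1 with hg
  have hM : ∀ i j, T ((Fᴴ * F) i j) xS = ∑ k, ω₀ (star (g k i) * g k j) := by
    intro i j
    rw [hT]
    have : (fun xB => ((Fᴴ * F) i j) (Ψ t (xS, xB)).1)
        = ∑ k, star (g k i) * g k j := by
      funext xB
      simp [Matrix.mul_apply, Matrix.conjTranspose_apply, Finset.sum_apply, hg]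
    rw [this, map_sum]
  rw [Matrix.posSemidef_iff_dotProduct_mulVec]
  constructor
  · -- Hermitian
    ext i j
    simp only [Matrix.conjTranspose_apply, Matrix.of_apply, Pi.star_apply,
      Complex.star_def, hM, map_sum]
    exact Finset.sum_congr rfl fun k _ => (omega_herm ω₀ him (g k i) (g k j)).symm
  · -- Positivity
    intro x
    set h : Fin n → B → ℂ := fun k => ∑ j, x j • g k j with hh
    have expand : ∀ k, ω₀ (star (h k) * h k)
        = ∑ i, ∑ j, (starRingEnd ℂ) (x i) * x j * ω₀ (star (g k i) * g k j) := by
      intro k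
      have e : star (h k) * h k
          = ∑ i, ∑ j, ((starRingEnd ℂ) (x i) * x j) • (star (g k i) * g k j) := by
        funext y
        simp only [Pi.mul_apply, Pi.star_apply, hh, Finset.sum_apply,
          Pi.smul_apply, smul_eq_mul, Complex.star_def, map_sum, _root_.map_mul]
        rw [Finset.sum_mul_sum]
        exact Finset.sum_congr rfl fun i _ => Finset.sum_congr rfl fun j _ => by ring
      rw [e, map_sum]
      exact Finset.sum_congr rfl fun i _ => by
        rw [map_sum]
        exact Finset.sum_congr rfl fun j _ => by
          rw [_root_.map_smul, smul_eq_mul]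
    have key : star x ⬝ᵥ (Matrix.of fun i j => T ((Fᴴ * F) i j) xS) *ᵥ x
          = ∑ k, ω₀ (star (h k) * h k) := by
        simp only [dotProduct, Matrix.mulVec, Matrix.of_apply, Pi.star_apply,
          Complex.star_def, hM, expand]
        conv_rhs => rw [Finset.sum_comm]
        refine Finset.sum_congr rfl fun i _ => ?_
        rw [Finset.mul_sum]
        refine Eq.trans (Finset.sum_congr rfl fun j _ => ?_) Finset.sum_comm
        rw [Finset.sum_mul, Finset.mul_sum]
        exact Finset.sum_congr rfl fun k _ => by ring
    rw [key]
    apply Finset.sum_nonneg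
    intro k _
    rw [Complex.le_def]
    constructor
    · simpa using (hpos (h k)).2
    · simpa using (him (h k)).symm
end

section
/- Any map S preserving squares with respect to a Hermitian star product ⋆ (i.e. S = id + Σ_{r≥1} ħ^r S_r with differential operators S_r, S(1) = 1, S(conj f) = conj(S f), and S(f̄ ⋆ g) = Σ_r ħ^r Σ_I conj(D_{r,I} f) · D_{r,I} g for differential operators D_{r,I}) is a completely positive map from the deformed algebra (C^∞(M)[[ħ]], ⋆) to the classical algebra (C^∞(M)[[ħ]], ·) with the undeformed pointwise product. -/
noncomputable section

/-- A formal series of real numbers is nonnegative if it is zero or its lowest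
nonvanishing coefficient is positive (the ring ordering of `ℝ[[ħ]]`). -/
def FormalNonneg (a : ℕ → ℝ) : Prop :=
  (∀ r, a r = 0) ∨ ∃ n, 0 < a n ∧ ∀ m < n, a m = 0

/-- Nonnegativity of a formal series of complex numbers: real and nonnegative
in the ordered ring `ℝ[[ħ]]`. -/
def SeriesNonneg (a : ℕ → ℂ) : Prop :=
  (∀ r, (a r).im = 0) ∧ FormalNonneg fun r => (a r).re

variable {X : Type*}

/-- Coefficientwise star (complex conjugation) of a formal series of functions. -/
def starSeries (u : ℕ → X → ℂ) : ℕ → X → ℂ := fun r => star (u r)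

/-- The coefficients of the star product `u ⋆ v` of two formal series of
functions, for the star product with bidifferential coefficients `C`. -/
def starMul (C : ℕ → (X → ℂ) → (X → ℂ) → (X → ℂ)) (u v : ℕ → X → ℂ) :
    ℕ → X → ℂ :=
  fun r => ∑ p ∈ Finset.HasAntidiagonal.antidiagonal r, ∑ q ∈ Finset.HasAntidiagonal.antidiagonal p.2,
    C p.1 (u q.1) (v q.2)

/-- Adjoint (conjugate transpose) of a matrix of formal series of functions. -/
def matAdj {n : ℕ} (U : Matrix (Fin n) (Fin n) (ℕ → X → ℂ)) :
    Matrix (Fin n) (Fin n) (ℕ → X → ℂ) :=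
  fun i j r => star (U j i r)

/-- Matrix star product for matrices of formal series. -/
def starMulMat (C : ℕ → (X → ℂ) → (X → ℂ) → (X → ℂ)) {n : ℕ}
    (U V : Matrix (Fin n) (Fin n) (ℕ → X → ℂ)) :
    Matrix (Fin n) (Fin n) (ℕ → X → ℂ) :=
  fun i j => ∑ k, starMul C (U i k) (V k j)

/-- A `ℂ[[ħ]]`-linear functional `μ = Σ ħ^r μ_r` applied to a matrix of formal
series. -/
def funcApply {n : ℕ} (μ : ℕ → (Matrix (Fin n) (Fin n) (X → ℂ) →ₗ[ℂ] ℂ))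
    (G : Matrix (Fin n) (Fin n) (ℕ → X → ℂ)) : ℕ → ℂ :=
  fun r => ∑ p ∈ Finset.HasAntidiagonal.antidiagonal r, μ p.1 (Matrix.of fun i j => G i j p.2)

/-- Positivity of a `ℂ[[ħ]]`-linear functional on the `n × n` matrix algebra
over the (possibly deformed) algebra with product coefficients `C`. -/
def PosFunc (C : ℕ → (X → ℂ) → (X → ℂ) → (X → ℂ)) {n : ℕ}
    (μ : ℕ → (Matrix (Fin n) (Fin n) (X → ℂ) →ₗ[ℂ] ℂ)) : Prop :=
  ∀ F : Matrix (Fin n) (Fin n) (ℕ → X → ℂ),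
    SeriesNonneg (funcApply μ (starMulMat C (matAdj F) F))

/-- Positivity of an algebra element: all positive functionals take
nonnegative values on it. -/
def PosElem (C : ℕ → (X → ℂ) → (X → ℂ) → (X → ℂ)) {n : ℕ}
    (H : Matrix (Fin n) (Fin n) (ℕ → X → ℂ)) : Prop :=
  ∀ μ : ℕ → (Matrix (Fin n) (Fin n) (X → ℂ) →ₗ[ℂ] ℂ),
    PosFunc C μ → SeriesNonneg (funcApply μ H)

/-- The coefficients of the undeformed (pointwise) product. -/
def Ccl (X : Type*) : ℕ → (X → ℂ) → (X → ℂ) → (X → ℂ) :=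
  fun r f g => if r = 0 then f * g else 0

open Finset in
private lemma conv_assoc {M : Type*} [AddCommMonoid M] (m : ℕ) (f : ℕ → ℕ → ℕ → M) :
    ∑ x ∈ antidiagonal m, ∑ y ∈ antidiagonal x.1, f y.1 y.2 x.2
    = ∑ x ∈ antidiagonal m, ∑ y ∈ antidiagonal x.2, f x.1 y.1 y.2 := by
  rw [Finset.sum_sigma', Finset.sum_sigma']
  refine Finset.sum_nbij' (fun x => ⟨(x.2.1, x.2.2 + x.1.2), (x.2.2, x.1.2)⟩)
    (fun x => ⟨(x.1.1 + x.2.1, x.2.2), (x.1.1, x.2.1)⟩) ?_ ?_ ?_ ?_ ?_ <;>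
    · rintro ⟨⟨a,b⟩,⟨c,d⟩⟩ h
      simp_all [Finset.mem_sigma, Finset.mem_antidiagonal]
      try omega

open Finset in
private lemma conv_swap {M : Type*} [AddCommMonoid M] (m : ℕ) (f : ℕ → ℕ → M) :
    ∑ x ∈ antidiagonal m, f x.1 x.2 = ∑ x ∈ antidiagonal m, f x.2 x.1 := by
  rw [← Finset.Nat.sum_antidiagonal_swap (n := m) (f := fun p => f p.2 p.1)]
  simp [Prod.swap]

private lemma formalNonneg_zero : FormalNonneg (fun _ => (0:ℝ)) := Or.inl fun _ => rfl

private lemma FormalNonneg.add' {a b : ℕ → ℝ} (ha : FormalNonneg a) (hb : FormalNonneg b) :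
    FormalNonneg (fun r => a r + b r) := by
  rcases ha with ha | ⟨n1, h1, h1'⟩
  · rcases hb with hb | ⟨n2, h2, h2'⟩
    · exact Or.inl fun r => by show a r + b r = 0; rw [ha r, hb r, add_zero]
    · exact Or.inr ⟨n2, by show 0 < a n2 + b n2; rw [ha n2, zero_add]; exact h2,
        fun m hm => by show a m + b m = 0; rw [ha m, h2' m hm, add_zero]⟩
  · rcases hb with hb | ⟨n2, h2, h2'⟩
    · exact Or.inr ⟨n1, by show 0 < a n1 + b n1; rw [hb n1, add_zero]; exact h1,
        fun m hm => by show a m + b m = 0; rw [hb m, h1' m hm, add_zero]⟩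
    · refine Or.inr ⟨min n1 n2, ?_, fun m hm => by
        show a m + b m = 0
        rw [h1' m (lt_of_lt_of_le hm (min_le_left _ _)),
            h2' m (lt_of_lt_of_le hm (min_le_right _ _)), add_zero]⟩
      show 0 < a (min n1 n2) + b (min n1 n2)
      rcases le_or_gt n1 n2 with h | h
      · rw [min_eq_left h]
        rcases eq_or_lt_of_le h with rfl | hlt
        · linarith
        · rw [h2' n1 hlt]; linarith
      · rw [min_eq_right h.le, h1' n2 h]; linarith

private lemma SeriesNonneg.add' {a b : ℕ → ℂ} (ha : SeriesNonneg a) (hb : SeriesNonneg b) :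
    SeriesNonneg (fun m => a m + b m) := by
  refine ⟨fun r => by simp [Complex.add_im, ha.1 r, hb.1 r], ?_⟩
  have := FormalNonneg.add' ha.2 hb.2
  simpa [Complex.add_re] using this

private lemma seriesNonneg_zero : SeriesNonneg (fun _ => (0:ℂ)) :=
  ⟨fun _ => rfl, formalNonneg_zero⟩

private lemma seriesNonneg_sum {ι : Type*} (s : Finset ι) (f : ι → ℕ → ℂ)
    (h : ∀ i ∈ s, SeriesNonneg (f i)) : SeriesNonneg (fun m => ∑ i ∈ s, f i m) := by
  induction s using Finset.cons_induction with
  | empty => simpa using seriesNonneg_zero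
  | cons i s hi ih =>
      simp only [Finset.sum_cons]
      exact SeriesNonneg.add' (h i (Finset.mem_cons_self i s))
        (ih fun j hj => h j (Finset.mem_cons_of_mem hj))

private lemma seriesNonneg_shift {a : ℕ → ℂ} (j : ℕ) (h : SeriesNonneg a) :
    SeriesNonneg (fun m => if j ≤ m then a (m - j) else 0) := by
  constructor
  · intro r; show (if j ≤ r then a (r - j) else 0).im = 0; split
    · exact h.1 _
    · rfl
  · rcases h.2 with h0 | ⟨n, hn, hn'⟩
    · left; intro r; show (if j ≤ r then a (r - j) else 0).re = 0; split
      · exact h0 _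
      · rfl
    · right
      refine ⟨n + j, by simp [hn], fun m hm => ?_⟩
      show (if j ≤ m then a (m - j) else 0).re = 0
      split
      · exact hn' _ (by omega)
      · rfl

private lemma FormalNonneg.pos_of {a : ℕ → ℝ} (ha : FormalNonneg a) {n : ℕ}
    (h0 : ∀ m < n, a m = 0) (hn : a n ≠ 0) : 0 < a n := by
  rcases ha with h | ⟨n', h1, h2⟩
  · exact absurd (h n) hn
  · rcases lt_trichotomy n' n with h' | rfl | h'
    · exact absurd (h0 n' h') (ne_of_gt h1)
    · exact h1
    · exact absurd (h2 n h') hn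

private lemma seriesNonneg_of_locallyFinite (B : ℕ → ℕ → ℂ)
    (h : ∀ j, SeriesNonneg (B j)) (hsupp : ∀ j m, m < j → B j m = 0) :
    SeriesNonneg fun m => ∑ j ∈ Finset.range (m + 1), B j m := by
  have agree : ∀ N m, m ≤ N →
      ∑ j ∈ Finset.range (N + 1), B j m = ∑ j ∈ Finset.range (m + 1), B j m := by
    intro N m hm
    refine (Finset.sum_subset (by intro x hx; simp only [Finset.mem_range] at *; omega)
      fun x hx hnx => ?_).symm
    simp only [Finset.mem_range] at hx hnx
    exact hsupp x m (by omega)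
  constructor
  · intro r
    rw [Complex.im_sum]
    exact Finset.sum_eq_zero fun j _ => (h j).1 r
  · by_cases hz : ∀ r, (∑ j ∈ Finset.range (r + 1), B j r).re = 0
    · exact Or.inl hz
    · push_neg at hz
      have hex : ∃ r, (∑ j ∈ Finset.range (r + 1), B j r).re ≠ 0 := hz
      set n := Nat.find hex with hn
      have hnne : (∑ j ∈ Finset.range (n + 1), B j n).re ≠ 0 := Nat.find_spec hex
      have hbelow : ∀ m < n, (∑ j ∈ Finset.range (m + 1), B j m).re = 0 := by
        intro m hm
        by_contra hc
        have : n ≤ m := Nat.find_le hc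
        omega
      have hS : SeriesNonneg (fun m => ∑ j ∈ Finset.range (n + 1), B j m) :=
        seriesNonneg_sum _ _ fun j _ => h j
      have hpos : 0 < (∑ j ∈ Finset.range (n + 1), B j n).re := by
        refine FormalNonneg.pos_of hS.2 (n := n) ?_ hnne
        intro m hm
        simp only
        rw [agree n m hm.le]
        exact hbelow m hm
      exact Or.inr ⟨n, hpos, fun m hm => hbelow m hm⟩


private def entrywise {X : Type*} {n : ℕ} (L : (X → ℂ) →ₗ[ℂ] (X → ℂ)) :
    Matrix (Fin n) (Fin n) (X → ℂ) →ₗ[ℂ] Matrix (Fin n) (Fin n) (X → ℂ) where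
  toFun A := Matrix.of fun i j => L (A i j)
  map_add' A B := by ext i j; simp [Matrix.add_apply]
  map_smul' c A := by ext i j; simp [Matrix.smul_apply]

private lemma of_sum {X : Type*} {n : ℕ} {ι : Type*} (s : Finset ι)
    (g : ι → Fin n → Fin n → (X → ℂ)) :
    (Matrix.of fun i j => ∑ t ∈ s, g t i j) = ∑ t ∈ s, Matrix.of fun i j => g t i j := by
  ext i j
  simp [Matrix.sum_apply]

private lemma map_of_sum {X : Type*} {n : ℕ} {ι : Type*}
    (μ : Matrix (Fin n) (Fin n) (X → ℂ) →ₗ[ℂ] ℂ) (s : Finset ι)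
    (g : ι → Fin n → Fin n → (X → ℂ)) :
    μ (Matrix.of fun i j => ∑ t ∈ s, g t i j) = ∑ t ∈ s, μ (Matrix.of fun i j => g t i j) := by
  rw [of_sum]; exact map_sum μ _ s

private lemma starMul_ccl {X : Type*} (u v : ℕ → X → ℂ) (d : ℕ) :
    starMul (Ccl X) u v d = ∑ w ∈ Finset.HasAntidiagonal.antidiagonal d, u w.1 * v w.2 := by
  show (∑ p ∈ Finset.HasAntidiagonal.antidiagonal d, ∑ q ∈ Finset.HasAntidiagonal.antidiagonal p.2,
      if p.1 = 0 then u q.1 * v q.2 else 0) = _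
  rw [Finset.sum_eq_single (0, d)]
  · simp
  · rintro ⟨c, d'⟩ hb hne
    have hc : c ≠ 0 := by
      rintro rfl
      simp only [Finset.HasAntidiagonal.mem_antidiagonal] at hb
      exact hne (by simp [← hb])
    simp [hc]
  · intro h; exact absurd (Finset.HasAntidiagonal.mem_antidiagonal.2 (by simp)) h

/-- A square-preserving map `S = id + Σ ħ^r S_r` with respect to
a Hermitian star product `⋆` (i.e. `S(f̄ ⋆ g) = Σ_r ħ^r Σ_I conj(D_{r,I} f) ·
D_{r,I} g`) is a completely positive map from the deformed algebra
`(C^∞(M)[[ħ]], ⋆)` to the classical algebra with the undeformed pointwise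
product: every matrix amplification maps positive elements to positive
elements. -/
theorem square_preserving_is_completely_positive {X : Type*}
    (C : ℕ → (X → ℂ) → (X → ℂ) → (X → ℂ))
    (hC0 : ∀ f g : X → ℂ, C 0 f g = f * g)
    (hherm : ∀ (r : ℕ) (f g : X → ℂ), star (C r f g) = C r (star g) (star f))
    (S : ℕ → ((X → ℂ) →ₗ[ℂ] (X → ℂ)))
    (hS0 : S 0 = LinearMap.id)
    (hS1 : ∀ r : ℕ, S r 1 = if r = 0 then 1 else 0)
    (hSstar : ∀ (r : ℕ) (f : X → ℂ), S r (star f) = star (S r f))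
    (k : ℕ → ℕ)
    (D : (r : ℕ) → Fin (k r) → ((X → ℂ) →ₗ[ℂ] (X → ℂ)))
    (hSq : ∀ (f g : X → ℂ) (r : ℕ),
      (∑ p ∈ Finset.HasAntidiagonal.antidiagonal r, S p.1 (C p.2 (star f) g)) =
        ∑ I : Fin (k r), star (D r I f) * D r I g) :
    ∀ (n : ℕ) (H : Matrix (Fin n) (Fin n) (ℕ → X → ℂ)),
      PosElem C H →
      PosElem (Ccl X)
        (Matrix.of fun i j =>
          (fun r => ∑ p ∈ Finset.HasAntidiagonal.antidiagonal r, S p.1 (H i j p.2))) := by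
  classical
  intro n H hH μ hμ
  -- the pulled-back functional ν = μ ∘ S (with Cauchy product of coefficients)
  set ν : ℕ → (Matrix (Fin n) (Fin n) (X → ℂ) →ₗ[ℂ] ℂ) :=
    fun a => ∑ y ∈ Finset.HasAntidiagonal.antidiagonal a, (μ y.1).comp (entrywise (S y.2)) with hν
  have hνapp : ∀ (a : ℕ) (M : Matrix (Fin n) (Fin n) (X → ℂ)),
      ν a M = ∑ y ∈ Finset.HasAntidiagonal.antidiagonal a,
        μ y.1 (Matrix.of fun i j => S y.2 (M i j)) := by
    intro a M
    simp only [hν]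
    rw [LinearMap.sum_apply]
    rfl
  -- ν is a positive functional for the deformed product
  have hνpos : PosFunc C ν := by
    intro F
    set DF : (j : ℕ) → Fin (k j) → Matrix (Fin n) (Fin n) (ℕ → X → ℂ) :=
      fun j I => Matrix.of fun i i' => fun s => D j I (F i i' s) with hDF
    set T : ℕ → ℕ → ℂ := fun j s =>
      ∑ x ∈ Finset.HasAntidiagonal.antidiagonal s, ∑ w ∈ Finset.HasAntidiagonal.antidiagonal x.2, ∑ kk : Fin n,
        ∑ I : Fin (k j), μ x.1 (Matrix.of fun i i' =>
          star (D j I (F kk i w.1)) * D j I (F kk i' w.2)) with hT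
    set B : ℕ → ℕ → ℂ := fun j m => if j ≤ m then T j (m - j) else 0 with hB
    have hsq_ent : ∀ (j : ℕ) (I : Fin (k j)) (i i' : Fin n) (d : ℕ),
        starMulMat (Ccl X) (matAdj (DF j I)) (DF j I) i i' d
          = ∑ w ∈ Finset.HasAntidiagonal.antidiagonal d, ∑ kk : Fin n,
              star (D j I (F kk i w.1)) * D j I (F kk i' w.2) := by
      intro j I i i' d
      calc starMulMat (Ccl X) (matAdj (DF j I)) (DF j I) i i' d
          = ∑ kk : Fin n,
              starMul (Ccl X) (matAdj (DF j I) i kk) (DF j I kk i') d := by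
            show (∑ kk : Fin n,
              starMul (Ccl X) (matAdj (DF j I) i kk) (DF j I kk i')) d = _
            rw [Finset.sum_apply]
        _ = ∑ kk : Fin n, ∑ w ∈ Finset.HasAntidiagonal.antidiagonal d,
              star (D j I (F kk i w.1)) * D j I (F kk i' w.2) := by
            refine Finset.sum_congr rfl fun kk _ => ?_
            rw [starMul_ccl]
            rfl
        _ = _ := Finset.sum_comm
    have hTpos : ∀ j, SeriesNonneg (T j) := by
      intro j
      have hTeq : T j = fun s => ∑ I : Fin (k j),
          funcApply μ (starMulMat (Ccl X) (matAdj (DF j I)) (DF j I)) s := by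
        funext s
        have step1 : ∀ I : Fin (k j),
            funcApply μ (starMulMat (Ccl X) (matAdj (DF j I)) (DF j I)) s
              = ∑ x ∈ Finset.HasAntidiagonal.antidiagonal s, ∑ w ∈ Finset.HasAntidiagonal.antidiagonal x.2,
                  ∑ kk : Fin n, μ x.1 (Matrix.of fun i i' =>
                    star (D j I (F kk i w.1)) * D j I (F kk i' w.2)) := by
          intro I
          show (∑ x ∈ Finset.HasAntidiagonal.antidiagonal s, μ x.1 (Matrix.of fun i i' =>
            starMulMat (Ccl X) (matAdj (DF j I)) (DF j I) i i' x.2)) = _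
          refine Finset.sum_congr rfl fun x _ => ?_
          rw [show (Matrix.of fun i i' =>
                starMulMat (Ccl X) (matAdj (DF j I)) (DF j I) i i' x.2)
              = Matrix.of fun i i' => ∑ w ∈ Finset.HasAntidiagonal.antidiagonal x.2, ∑ kk : Fin n,
                  star (D j I (F kk i w.1)) * D j I (F kk i' w.2) from by
            refine congrArg Matrix.of ?_
            funext i i'
            exact hsq_ent j I i i' x.2]
          rw [map_of_sum]
          exact Finset.sum_congr rfl fun w _ => map_of_sum _ _ _
        calc T j s
            = ∑ x ∈ Finset.HasAntidiagonal.antidiagonal s, ∑ w ∈ Finset.HasAntidiagonal.antidiagonal x.2,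
                ∑ kk : Fin n, ∑ I : Fin (k j), μ x.1 (Matrix.of fun i i' =>
                  star (D j I (F kk i w.1)) * D j I (F kk i' w.2)) := by
              simp only [hT]
          _ = ∑ I : Fin (k j), ∑ x ∈ Finset.HasAntidiagonal.antidiagonal s,
                ∑ w ∈ Finset.HasAntidiagonal.antidiagonal x.2, ∑ kk : Fin n,
                  μ x.1 (Matrix.of fun i i' =>
                    star (D j I (F kk i w.1)) * D j I (F kk i' w.2)) := by
              refine Eq.symm (Finset.sum_comm.trans ?_)
              refine Finset.sum_congr rfl fun x _ => ?_
              exact Finset.sum_comm.trans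
                (Finset.sum_congr rfl fun w _ => Finset.sum_comm)
          _ = ∑ I : Fin (k j),
                funcApply μ (starMulMat (Ccl X) (matAdj (DF j I)) (DF j I)) s :=
              Finset.sum_congr rfl fun I _ => (step1 I).symm
      rw [hTeq]
      exact seriesNonneg_sum Finset.univ _ fun I _ => hμ (DF j I)
    have hBpos : ∀ j, SeriesNonneg (B j) := by
      intro j
      simp only [hB]
      exact seriesNonneg_shift j (hTpos j)
    have hBsupp : ∀ j m, m < j → B j m = 0 := by
      intro j m hm
      simp only [hB]
      exact if_neg (by omega)
    have hGent : ∀ (i i' : Fin n) (b : ℕ),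
        starMulMat C (matAdj F) F i i' b
          = ∑ z ∈ Finset.HasAntidiagonal.antidiagonal b, ∑ w ∈ Finset.HasAntidiagonal.antidiagonal z.2,
              ∑ kk : Fin n, C z.1 (star (F kk i w.1)) (F kk i' w.2) := by
      intro i i' b
      calc starMulMat C (matAdj F) F i i' b
          = ∑ kk : Fin n, ∑ z ∈ Finset.HasAntidiagonal.antidiagonal b, ∑ w ∈ Finset.HasAntidiagonal.antidiagonal z.2,
              C z.1 (star (F kk i w.1)) (F kk i' w.2) := by
            show (∑ kk : Fin n, starMul C (matAdj F i kk) (F kk i')) b = _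
            rw [Finset.sum_apply]
            rfl
        _ = _ := Finset.sum_comm.trans
            (Finset.sum_congr rfl fun z _ => Finset.sum_comm)
    set g : ℕ → ℕ → ℕ → ℕ → ℂ := fun p q c d =>
      ∑ w ∈ Finset.HasAntidiagonal.antidiagonal d, ∑ kk : Fin n,
        μ p (Matrix.of fun i i' =>
          S q (C c (star (F kk i w.1)) (F kk i' w.2))) with hg
    have main : ∀ m, funcApply ν (starMulMat C (matAdj F) F) m
        = ∑ j ∈ Finset.range (m + 1), B j m := by
      intro m
      calc funcApply ν (starMulMat C (matAdj F) F) m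
          = ∑ x ∈ Finset.HasAntidiagonal.antidiagonal m, ∑ y ∈ Finset.HasAntidiagonal.antidiagonal x.1,
              μ y.1 (Matrix.of fun i i' =>
                S y.2 (starMulMat C (matAdj F) F i i' x.2)) := by
            show (∑ x ∈ Finset.HasAntidiagonal.antidiagonal m, ν x.1 (Matrix.of fun i i' =>
              starMulMat C (matAdj F) F i i' x.2)) = _
            refine Finset.sum_congr rfl fun x _ => ?_
            rw [hνapp]
            rfl
        _ = ∑ x ∈ Finset.HasAntidiagonal.antidiagonal m, ∑ y ∈ Finset.HasAntidiagonal.antidiagonal x.2,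
              μ x.1 (Matrix.of fun i i' =>
                S y.1 (starMulMat C (matAdj F) F i i' y.2)) :=
            conv_assoc m fun p q b => μ p (Matrix.of fun i i' =>
              S q (starMulMat C (matAdj F) F i i' b))
        _ = ∑ x ∈ Finset.HasAntidiagonal.antidiagonal m, ∑ y ∈ Finset.HasAntidiagonal.antidiagonal x.2,
              ∑ z ∈ Finset.HasAntidiagonal.antidiagonal y.2, g x.1 y.1 z.1 z.2 := by
            refine Finset.sum_congr rfl fun x _ => Finset.sum_congr rfl fun y _ => ?_
            rw [show (Matrix.of fun i i' =>
                  S y.1 (starMulMat C (matAdj F) F i i' y.2))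
                = Matrix.of fun i i' => ∑ z ∈ Finset.HasAntidiagonal.antidiagonal y.2,
                    ∑ w ∈ Finset.HasAntidiagonal.antidiagonal z.2, ∑ kk : Fin n,
                      S y.1 (C z.1 (star (F kk i w.1)) (F kk i' w.2)) from by
              refine congrArg Matrix.of ?_
              funext i i'
              rw [hGent i i' y.2]
              simp only [map_sum]]
            rw [map_of_sum]
            refine Finset.sum_congr rfl fun z _ => ?_
            simp only [hg]
            rw [map_of_sum]
            exact Finset.sum_congr rfl fun w _ => map_of_sum _ _ _
        _ = ∑ x ∈ Finset.HasAntidiagonal.antidiagonal m, ∑ y ∈ Finset.HasAntidiagonal.antidiagonal x.2,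
              ∑ z ∈ Finset.HasAntidiagonal.antidiagonal y.1, g x.1 z.1 z.2 y.2 := by
            refine Finset.sum_congr rfl fun x _ => ?_
            exact (conv_assoc x.2 fun q c d => g x.1 q c d).symm
        _ = ∑ x ∈ Finset.HasAntidiagonal.antidiagonal m, ∑ y ∈ Finset.HasAntidiagonal.antidiagonal x.1,
              ∑ z ∈ Finset.HasAntidiagonal.antidiagonal y.2, g y.1 z.1 z.2 x.2 :=
            (conv_assoc m fun p j d => ∑ z ∈ Finset.HasAntidiagonal.antidiagonal j,
              g p z.1 z.2 d).symm
        _ = ∑ x ∈ Finset.HasAntidiagonal.antidiagonal m, ∑ y ∈ Finset.HasAntidiagonal.antidiagonal x.1,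
              ∑ z ∈ Finset.HasAntidiagonal.antidiagonal y.1, g y.2 z.1 z.2 x.2 := by
            refine Finset.sum_congr rfl fun x _ => ?_
            exact conv_swap x.1 fun p j => ∑ z ∈ Finset.HasAntidiagonal.antidiagonal j,
              g p z.1 z.2 x.2
        _ = ∑ x ∈ Finset.HasAntidiagonal.antidiagonal m, ∑ y ∈ Finset.HasAntidiagonal.antidiagonal x.2,
              ∑ z ∈ Finset.HasAntidiagonal.antidiagonal x.1, g y.1 z.1 z.2 y.2 :=
            conv_assoc m fun j p d => ∑ z ∈ Finset.HasAntidiagonal.antidiagonal j, g p z.1 z.2 d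
        _ = ∑ x ∈ Finset.HasAntidiagonal.antidiagonal m, T x.1 x.2 := by
            refine Finset.sum_congr rfl fun x _ => ?_
            simp only [hT]
            refine Finset.sum_congr rfl fun y _ => ?_
            simp only [hg]
            calc ∑ z ∈ Finset.HasAntidiagonal.antidiagonal x.1, ∑ w ∈ Finset.HasAntidiagonal.antidiagonal y.2,
                  ∑ kk : Fin n, μ y.1 (Matrix.of fun i i' =>
                    S z.1 (C z.2 (star (F kk i w.1)) (F kk i' w.2)))
                = ∑ w ∈ Finset.HasAntidiagonal.antidiagonal y.2, ∑ z ∈ Finset.HasAntidiagonal.antidiagonal x.1,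
                    ∑ kk : Fin n, μ y.1 (Matrix.of fun i i' =>
                      S z.1 (C z.2 (star (F kk i w.1)) (F kk i' w.2))) :=
                  Finset.sum_comm
              _ = ∑ w ∈ Finset.HasAntidiagonal.antidiagonal y.2, ∑ kk : Fin n,
                    ∑ z ∈ Finset.HasAntidiagonal.antidiagonal x.1, μ y.1 (Matrix.of fun i i' =>
                      S z.1 (C z.2 (star (F kk i w.1)) (F kk i' w.2))) :=
                  Finset.sum_congr rfl fun w _ => Finset.sum_comm
              _ = ∑ w ∈ Finset.HasAntidiagonal.antidiagonal y.2, ∑ kk : Fin n,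
                    ∑ I : Fin (k x.1), μ y.1 (Matrix.of fun i i' =>
                      star (D x.1 I (F kk i w.1)) * D x.1 I (F kk i' w.2)) := by
                  refine Finset.sum_congr rfl fun w _ => Finset.sum_congr rfl fun kk _ => ?_
                  rw [← map_of_sum]
                  rw [show (Matrix.of fun i i' => ∑ z ∈ Finset.HasAntidiagonal.antidiagonal x.1,
                        S z.1 (C z.2 (star (F kk i w.1)) (F kk i' w.2)))
                      = Matrix.of fun i i' => ∑ I : Fin (k x.1),
                          star (D x.1 I (F kk i w.1)) * D x.1 I (F kk i' w.2) from by
                    refine congrArg Matrix.of ?_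
                    funext i i'
                    exact hSq (F kk i w.1) (F kk i' w.2) x.1]
                  rw [map_of_sum]
        _ = ∑ j ∈ Finset.range (m + 1), T j (m - j) :=
            Finset.Nat.sum_antidiagonal_eq_sum_range_succ_mk (fun x => T x.1 x.2) m
        _ = ∑ j ∈ Finset.range (m + 1), B j m := by
            refine Finset.sum_congr rfl fun j hj => ?_
            simp only [hB]
            rw [if_pos (by simpa using Nat.lt_succ_iff.mp (Finset.mem_range.mp hj))]
    have : funcApply ν (starMulMat C (matAdj F) F)
        = fun m => ∑ j ∈ Finset.range (m + 1), B j m := funext main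
    rw [this]
    exact seriesNonneg_of_locallyFinite B hBpos hBsupp
  -- identify the two functionals' values
  have key2 : ∀ m, funcApply μ (Matrix.of fun i j =>
        (fun r => ∑ p ∈ Finset.HasAntidiagonal.antidiagonal r, S p.1 (H i j p.2))) m
      = funcApply ν H m := by
    intro m
    calc funcApply μ (Matrix.of fun i j =>
          (fun r => ∑ p ∈ Finset.HasAntidiagonal.antidiagonal r, S p.1 (H i j p.2))) m
        = ∑ x ∈ Finset.HasAntidiagonal.antidiagonal m,
            μ x.1 (Matrix.of fun i j => ∑ p ∈ Finset.HasAntidiagonal.antidiagonal x.2,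
              S p.1 (H i j p.2)) := by
          show (∑ x ∈ Finset.HasAntidiagonal.antidiagonal m, μ x.1 (Matrix.of fun i j =>
            Matrix.of (fun i j r => ∑ p ∈ Finset.HasAntidiagonal.antidiagonal r, S p.1 (H i j p.2)) i j x.2)) = _
          simp only [Matrix.of_apply]
      _ = ∑ x ∈ Finset.HasAntidiagonal.antidiagonal m, ∑ y ∈ Finset.HasAntidiagonal.antidiagonal x.2,
            μ x.1 (Matrix.of fun i j => S y.1 (H i j y.2)) := by
          refine Finset.sum_congr rfl fun x _ => ?_
          exact map_of_sum (μ x.1) _ _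
      _ = ∑ x ∈ Finset.HasAntidiagonal.antidiagonal m, ∑ y ∈ Finset.HasAntidiagonal.antidiagonal x.1,
            μ y.1 (Matrix.of fun i j => S y.2 (H i j x.2)) :=
          (conv_assoc m fun p a s => μ p (Matrix.of fun i j => S a (H i j s))).symm
      _ = funcApply ν H m := by
          refine Finset.sum_congr rfl fun x _ => ?_
          rw [hνapp]
          rfl
  have hfin := hH ν hνpos
  have heq : funcApply μ (Matrix.of fun i j =>
      (fun r => ∑ p ∈ Finset.HasAntidiagonal.antidiagonal r, S p.1 (H i j p.2))) = funcApply ν H :=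
    funext key2
  rw [heq]
  exact hfin

end
end

section
/- Let M be a Poisson manifold with a Hermitian star product ⋆, and suppose that for every chart domain U_α of a finite atlas there exists a local square-preserving map S_α with respect to ⋆|_{U_α} with local differential operators D_{r,I,α}. Choosing a finite quadratic partition of unity χ_α with supp χ_α ⊆ U_α and Σ_α conj(χ_α) χ_α = 1, the globally defined operator S(f) = Σ_α conj(χ_α) χ_α S_α(f|_{U_α}) is a square-preserving map with respect to ⋆ on all of M; explicitly, S(f̄ ⋆ g) = Σ_r ħ^r Σ_{I,α} conj(χ_α D_{r,I,α}(f)) χ_α D_{r,I,α}(g). -/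
/-- Globalization of square-preserving maps. Given a finite atlas
`U_α` of `M`, local square-preserving maps `S_α` (with local operators
`D_{r,I,α}`) for the Hermitian star product `⋆` (with bidifferential
coefficients `C`), and a finite quadratic partition of unity `χ_α` subordinate
to `U_α`, the operator `S(f) = Σ_α conj(χ_α) χ_α S_α(f)` is a globally defined
square-preserving map with respect to `⋆`:
`S(f̄ ⋆ g) = Σ_r ħ^r Σ_{I,α} conj(χ_α D_{r,I,α} f) · (χ_α D_{r,I,α} g)`. -/
theorem globalization_of_square_preserving {M : Type*} (N : ℕ)
    (U : Fin N → Set M)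
    (C : ℕ → (M → ℂ) → (M → ℂ) → (M → ℂ))
    (hC0 : ∀ f g : M → ℂ, C 0 f g = f * g)
    (hherm : ∀ (r : ℕ) (f g : M → ℂ), star (C r f g) = C r (star g) (star f))
    (χ : Fin N → M → ℂ)
    (hsupp : ∀ (α : Fin N) (x : M), x ∉ U α → χ α x = 0)
    (hpart : ∀ x : M, ∑ α, star (χ α x) * χ α x = 1)
    (k : ℕ → ℕ)
    (Sloc : Fin N → ℕ → (M → ℂ) → (M → ℂ))
    (hSloc0 : ∀ α : Fin N, Sloc α 0 = id)
    (hSloc1 : ∀ (α : Fin N) (r : ℕ), 1 ≤ r → Sloc α r 1 = 0)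
    (hSlocstar : ∀ (α : Fin N) (r : ℕ) (f : M → ℂ),
      Sloc α r (star f) = star (Sloc α r f))
    (D : (r : ℕ) → Fin (k r) → Fin N → (M → ℂ) → (M → ℂ))
    (hlocSq : ∀ (α : Fin N) (f g : M → ℂ) (r : ℕ), ∀ x ∈ U α,
      (∑ p ∈ Finset.HasAntidiagonal.antidiagonal r, Sloc α p.1 (C p.2 (star f) g)) x =
        ∑ I : Fin (k r), star (D r I α f x) * D r I α g x)
    (S : ℕ → (M → ℂ) → (M → ℂ))
    (hS : ∀ (r : ℕ) (f : M → ℂ) (x : M),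
      S r f x = ∑ α, star (χ α x) * χ α x * Sloc α r f x) :
    (∀ f : M → ℂ, S 0 f = f) ∧
    (∀ r : ℕ, 1 ≤ r → S r 1 = 0) ∧
    (∀ (r : ℕ) (f : M → ℂ), S r (star f) = star (S r f)) ∧
    (∀ (f g : M → ℂ) (r : ℕ) (x : M),
      (∑ p ∈ Finset.HasAntidiagonal.antidiagonal r, S p.1 (C p.2 (star f) g)) x =
        ∑ α, ∑ I : Fin (k r),
          star (χ α x * D r I α f x) * (χ α x * D r I α g x)) := by
  refine ⟨?_, ?_, ?_, ?_⟩
  · intro f; funext x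
    rw [hS]
    simp only [hSloc0, id_eq]
    rw [← Finset.sum_mul, hpart, one_mul]
  · intro r hr; funext x
    rw [hS]
    simp [hSloc1 _ _ hr]
  · intro r f; funext x
    rw [Pi.star_apply, hS, hS]
    rw [star_sum]
    refine Finset.sum_congr rfl fun α _ => ?_
    rw [hSlocstar, Pi.star_apply, star_mul, star_mul, star_star]
    ring
  · intro f g r x
    simp only [Finset.sum_apply, hS]
    rw [Finset.sum_comm]
    refine Finset.sum_congr rfl fun α _ => ?_
    rw [← Finset.mul_sum]
    by_cases hx : x ∈ U α
    · have h := hlocSq α f g r x hx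
      simp only [Finset.sum_apply] at h
      rw [h, Finset.mul_sum]
      refine Finset.sum_congr rfl fun I _ => ?_
      rw [star_mul]
      ring
    · simp [hsupp α x hx]
end

section
/- Let ⋆ be a Hermitian star product on a Poisson manifold M and S a square-preserving map with respect to ⋆. Then the equivalent star product f ⋆' g := S(S⁻¹(f) ⋆ S⁻¹(g)) has the property that every classically positive linear functional ω₀ : C^∞(M) → ℂ (extended ℂ[[ħ]]-linearly) is positive with respect to ⋆': ω₀(conj(f) ⋆' f) ≥ 0 in ℝ[[ħ]] for all f ∈ C^∞(M)[[ħ]]. -/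
noncomputable section

variable {X : Type*}

/-- A formal series of operators `T = Σ ħ^a T_a` applied to a formal series. -/
def applySeries (T : ℕ → ((X → ℂ) →ₗ[ℂ] (X → ℂ))) (u : ℕ → X → ℂ) :
    ℕ → X → ℂ :=
  fun r => ∑ p ∈ Finset.HasAntidiagonal.antidiagonal r, T p.1 (u p.2)

/-- Pointwise (undeformed) product of formal series of functions. -/
def seriesMul (u v : ℕ → X → ℂ) : ℕ → X → ℂ :=
  fun r => ∑ p ∈ Finset.HasAntidiagonal.antidiagonal r, u p.1 * v p.2

section AuxLemmas

variable {X : Type*}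

lemma quad_aux {A K : ℝ} (hK : 0 ≤ K) (h : ∀ t : ℝ, 0 ≤ t * A + t ^ 2 * K) : A = 0 := by
  by_contra hA
  have hK1 : (0:ℝ) < K + 1 := by linarith
  have ht := h (-A / (K + 1))
  have heq : -A / (K + 1) * A + (-A / (K + 1)) ^ 2 * K = -(A ^ 2) / (K + 1) ^ 2 := by
    field_simp
    ring
  rw [heq] at ht
  have : 0 < A ^ 2 / (K + 1) ^ 2 := by positivity
  have : -(A ^ 2) / (K + 1) ^ 2 < 0 := by
    rw [neg_div]; linarith
  linarith

lemma expand_aux (ω₀ : (X → ℂ) →ₗ[ℂ] ℂ) (g h : X → ℂ) (c : ℂ) :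
    ω₀ (star (g + c • h) * (g + c • h)) =
      ω₀ (star g * g) + c * ω₀ (star g * h) + (starRingEnd ℂ c) * ω₀ (star h * g)
        + (c * starRingEnd ℂ c) * ω₀ (star h * h) := by
  have hst : star (g + c • h) = star g + (starRingEnd ℂ c) • star h := by
    rw [star_add, star_smul]; rfl
  rw [hst]
  have hexp : (star g + (starRingEnd ℂ c) • star h) * (g + c • h)
      = star g * g + c • (star g * h) + (starRingEnd ℂ c) • (star h * g)
        + (c * starRingEnd ℂ c) • (star h * h) := by
    funext x
    simp only [Pi.mul_apply, Pi.add_apply, Pi.smul_apply, Pi.star_apply, smul_eq_mul]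
    ring
  rw [hexp]
  simp only [map_add, map_smul, smul_eq_mul]

lemma pair_im (ω₀ : (X → ℂ) →ₗ[ℂ] ℂ)
    (hω₀ : ∀ f : X → ℂ, (ω₀ (star f * f)).im = 0 ∧ 0 ≤ (ω₀ (star f * f)).re)
    (g h : X → ℂ) : (ω₀ (star g * h)).im + (ω₀ (star h * g)).im = 0 := by
  have h1 := (hω₀ (g + h)).1
  have he := expand_aux ω₀ g h 1
  simp only [one_smul, map_one, one_mul, mul_one] at he
  rw [he] at h1
  simp only [Complex.add_im] at h1
  have := (hω₀ g).1
  have := (hω₀ h).1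
  linarith

lemma key_zero (ω₀ : (X → ℂ) →ₗ[ℂ] ℂ)
    (hω₀ : ∀ f : X → ℂ, (ω₀ (star f * f)).im = 0 ∧ 0 ≤ (ω₀ (star f * f)).re)
    (g h : X → ℂ) (hg : ω₀ (star g * g) = 0) :
    ω₀ (star g * h) = 0 ∧ ω₀ (star h * g) = 0 := by
  set z := ω₀ (star g * h) with hz
  set w := ω₀ (star h * g) with hw
  set K := ω₀ (star h * h) with hK
  have hKim : K.im = 0 := (hω₀ h).1
  have hKre : 0 ≤ K.re := (hω₀ h).2
  have him0 : z.im + w.im = 0 := pair_im ω₀ hω₀ g h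
  -- real direction
  have hre : z.re + w.re = 0 := by
    apply quad_aux hKre
    intro t
    have h2 := (hω₀ (g + (t:ℂ) • h)).2
    rw [expand_aux ω₀ g h (t:ℂ), hg] at h2
    simp only [Complex.conj_ofReal, zero_add, Complex.add_re, Complex.mul_re,
      Complex.ofReal_re, Complex.ofReal_im, Complex.mul_im, zero_mul, sub_zero,
      mul_zero, zero_sub, add_zero, hKim] at h2
    nlinarith [h2]
  -- imaginary direction
  have h3 := (hω₀ (g + ((1:ℝ):ℂ) • Complex.I • h)).1
  have h4 : z.re = w.re := by
    have he := expand_aux ω₀ g h Complex.I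
    have h3 := (hω₀ (g + Complex.I • h)).1
    rw [he, hg] at h3
    simp only [Complex.conj_I, zero_add, Complex.add_im, Complex.mul_im, Complex.I_re,
      Complex.I_im, Complex.neg_re, Complex.neg_im, Complex.mul_re, zero_mul, one_mul,
      mul_zero, mul_one, mul_neg, neg_zero, zero_add, zero_sub, neg_neg, hKim] at h3
    linarith
  have h5 : w.im - z.im = 0 := by
    apply quad_aux hKre
    intro t
    have h2 := (hω₀ (g + ((t:ℂ) * Complex.I) • h)).2
    rw [expand_aux ω₀ g h ((t:ℂ) * Complex.I), hg] at h2
    simp only [map_mul, Complex.conj_ofReal, Complex.conj_I, zero_add, Complex.add_re,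
      Complex.mul_re, Complex.mul_im, Complex.ofReal_re, Complex.ofReal_im, Complex.I_re,
      Complex.I_im, Complex.neg_re, Complex.neg_im, hKim] at h2
    nlinarith [h2]
  constructor
  · apply Complex.ext <;> simp <;> linarith
  · apply Complex.ext <;> simp <;> linarith

lemma gram_im (ω₀ : (X → ℂ) →ₗ[ℂ] ℂ)
    (hω₀ : ∀ f : X → ℂ, (ω₀ (star f * f)).im = 0 ∧ 0 ≤ (ω₀ (star f * f)).re)
    (g : ℕ → X → ℂ) (s : ℕ) :
    ((∑ q ∈ Finset.HasAntidiagonal.antidiagonal s, ω₀ (star (g q.1) * g q.2)) : ℂ).im = 0 := by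
  rw [Complex.im_sum]
  apply Finset.sum_involution (fun a _ => a.swap)
  · intro a _
    exact pair_im ω₀ hω₀ (g a.1) (g a.2)
  · intro a _ ha
    by_contra hsw
    apply ha
    have h1 : a.2 = a.1 := congrArg Prod.fst hsw
    have h2 := pair_im ω₀ hω₀ (g a.1) (g a.2)
    rw [h1] at h2 ⊢
    linarith
  · intro a _
    rfl
  · intro a ha
    rw [Finset.HasAntidiagonal.mem_antidiagonal] at ha ⊢
    simp only [Prod.fst_swap, Prod.snd_swap]
    omega

lemma gram_re (ω₀ : (X → ℂ) →ₗ[ℂ] ℂ)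
    (hω₀ : ∀ f : X → ℂ, (ω₀ (star f * f)).im = 0 ∧ 0 ≤ (ω₀ (star f * f)).re)
    (g : ℕ → X → ℂ) :
    (∀ s, (∑ q ∈ Finset.HasAntidiagonal.antidiagonal s, ω₀ (star (g q.1) * g q.2)) = 0) ∨
    ∃ n, 0 < ((∑ q ∈ Finset.HasAntidiagonal.antidiagonal n, ω₀ (star (g q.1) * g q.2)) : ℂ).re ∧
      ∀ m < n, (∑ q ∈ Finset.HasAntidiagonal.antidiagonal m, ω₀ (star (g q.1) * g q.2)) = 0 := by
  classical
  by_cases hall : ∀ q, ω₀ (star (g q) * g q) = 0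
  · left
    intro s
    apply Finset.sum_eq_zero
    intro q _
    exact (key_zero ω₀ hω₀ (g q.1) (g q.2) (hall q.1)).1
  · right
    push_neg at hall
    have hex : ∃ q, ω₀ (star (g q) * g q) ≠ 0 := hall
    set q0 := Nat.find hex with hq0
    have hq0spec := Nat.find_spec hex
    have hq0min : ∀ q < q0, ω₀ (star (g q) * g q) = 0 := by
      intro q hq
      by_contra h
      exact absurd hq (not_lt.2 (Nat.find_le h))
    have hterm : ∀ q : ℕ × ℕ, q.1 < q0 ∨ q.2 < q0 → ω₀ (star (g q.1) * g q.2) = 0 := by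
      rintro q (h | h)
      · exact (key_zero ω₀ hω₀ (g q.1) (g q.2) (hq0min _ h)).1
      · exact (key_zero ω₀ hω₀ (g q.2) (g q.1) (hq0min _ h)).2
    refine ⟨2 * q0, ?_, ?_⟩
    · have hsum : (∑ q ∈ Finset.HasAntidiagonal.antidiagonal (2 * q0), ω₀ (star (g q.1) * g q.2))
          = ω₀ (star (g q0) * g q0) := by
        rw [Finset.sum_eq_single (q0, q0)]
        · intro q hq hne
          rw [Finset.HasAntidiagonal.mem_antidiagonal] at hq
          apply hterm
          rcases lt_or_ge q.1 q0 with h | h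
          · exact Or.inl h
          · right
            rcases lt_or_ge q.2 q0 with h2 | h2
            · exact h2
            · exfalso; apply hne
              have : q.1 = q0 := by omega
              have : q.2 = q0 := by omega
              exact Prod.ext (by omega) (by omega)
        · intro h
          exact absurd (Finset.HasAntidiagonal.mem_antidiagonal.2 (by omega)) h
      rw [hsum]
      rcases (hω₀ (g q0)).2.lt_or_eq with h | h
      · exact h
      · exfalso
        apply hq0spec
        apply Complex.ext
        · exact h.symm
        · simpa using (hω₀ (g q0)).1
    · intro m hm
      apply Finset.sum_eq_zero
      intro q hq
      rw [Finset.HasAntidiagonal.mem_antidiagonal] at hq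
      apply hterm
      omega

lemma combine (a : ℕ → ℂ) (k : ℕ → ℕ) (b : (r : ℕ) → Fin (k r) → ℕ → ℂ)
    (hab : ∀ m, a m = ∑ p ∈ Finset.HasAntidiagonal.antidiagonal m, ∑ I : Fin (k p.1), b p.1 I p.2)
    (him : ∀ r (I : Fin (k r)) s, (b r I s).im = 0)
    (hb : ∀ r (I : Fin (k r)), (∀ s, b r I s = 0) ∨
      ∃ n, 0 < (b r I n).re ∧ ∀ m < n, b r I m = 0) :
    SeriesNonneg a := by
  classical
  constructor
  · intro m
    rw [hab, Complex.im_sum]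
    apply Finset.sum_eq_zero
    intro p _
    rw [Complex.im_sum]
    exact Finset.sum_eq_zero fun I _ => him p.1 I p.2
  · by_cases hz : ∀ r (I : Fin (k r)) s, b r I s = 0
    · left
      intro m
      show (a m).re = 0
      rw [hab]
      simp only [hz]
      simp
    · right
      push_neg at hz
      obtain ⟨r0, I0, s0, hs0⟩ := hz
      have hSne : ∃ n, ∃ r, r ≤ n ∧ ∃ I : Fin (k r),
          0 < (b r I (n - r)).re ∧ ∀ m < n - r, b r I m = 0 := by
        rcases hb r0 I0 with h | ⟨n0, hpos, hzero⟩
        · exact absurd (h s0) hs0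
        · exact ⟨r0 + n0, r0, Nat.le_add_right _ _, I0,
            by simpa using hpos, fun m hm => hzero m (by omega)⟩
      set N := Nat.find hSne with hN
      have hNS := Nat.find_spec hSne
      have hmin : ∀ m < N, ¬ ∃ r, r ≤ m ∧ ∃ I : Fin (k r),
          0 < (b r I (m - r)).re ∧ ∀ m' < m - r, b r I m' = 0 :=
        fun m hm => Nat.find_min hSne hm
      have hzero_lt : ∀ r (I : Fin (k r)) s, r + s < N → b r I s = 0 := by
        intro r I s hlt
        rcases hb r I with h | ⟨n0, hpos, hzero⟩
        · exact h s
        · rcases lt_or_ge s n0 with h' | h'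
          · exact hzero s h'
          · exfalso
            apply hmin (r + n0) (by omega)
            exact ⟨r, Nat.le_add_right _ _, I, by simpa using hpos,
              fun m hm => hzero m (by omega)⟩
      have hnn_at : ∀ r (I : Fin (k r)) s, r + s = N → 0 ≤ (b r I s).re := by
        intro r I s hs
        rcases hb r I with h | ⟨n0, hpos, hzero⟩
        · rw [h s]; simp
        · rcases lt_trichotomy s n0 with h' | h' | h'
          · rw [hzero s h']; simp
          · subst h'; exact hpos.le
          · exfalso
            apply hmin (r + n0) (by omega)
            exact ⟨r, Nat.le_add_right _ _, I, by simpa using hpos,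
              fun m hm => hzero m (by omega)⟩
      refine ⟨N, ?_, ?_⟩
      · obtain ⟨rs, hrs, Is, hposs, hzeros⟩ := hNS
        show 0 < (a N).re
        rw [hab, Complex.re_sum]
        apply Finset.sum_pos'
        · intro p hp
          rw [Finset.HasAntidiagonal.mem_antidiagonal] at hp
          rw [Complex.re_sum]
          exact Finset.sum_nonneg fun I _ => hnn_at p.1 I p.2 hp
        · refine ⟨(rs, N - rs), Finset.HasAntidiagonal.mem_antidiagonal.2 (by omega), ?_⟩
          rw [Complex.re_sum]
          apply Finset.sum_pos'
          · intro I _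
            exact hnn_at rs I (N - rs) (by omega)
          · exact ⟨Is, Finset.mem_univ _, hposs⟩
      · intro m hm
        show (a m).re = 0
        rw [hab, Complex.re_sum]
        apply Finset.sum_eq_zero
        intro p hp
        rw [Finset.HasAntidiagonal.mem_antidiagonal] at hp
        rw [Complex.re_sum]
        apply Finset.sum_eq_zero
        intro I _
        rw [hzero_lt p.1 I p.2 (by omega)]
        simp

end AuxLemmas

/-- If `S` is a square-preserving map for the Hermitian star
product `⋆` (coefficients `C`), then for the equivalent star product
`f ⋆' g = S(S⁻¹ f ⋆ S⁻¹ g)` every classically positive linear functional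
`ω₀`, extended `ℂ[[ħ]]`-linearly, is positive with respect to `⋆'`:
`ω₀(conj f ⋆' f) ≥ 0` in `ℝ[[ħ]]` for all formal series `f`. -/
theorem equivalent_star_product_classical_positivity {X : Type*}
    (C : ℕ → (X → ℂ) → (X → ℂ) → (X → ℂ))
    (hC0 : ∀ f g : X → ℂ, C 0 f g = f * g)
    (hherm : ∀ (r : ℕ) (f g : X → ℂ), star (C r f g) = C r (star g) (star f))
    (S Sinv : ℕ → ((X → ℂ) →ₗ[ℂ] (X → ℂ)))
    (hS0 : S 0 = LinearMap.id)
    (hS1 : ∀ r : ℕ, S r 1 = if r = 0 then 1 else 0)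
    (hSstar : ∀ (r : ℕ) (f : X → ℂ), S r (star f) = star (S r f))
    (hinv : ∀ u : ℕ → X → ℂ,
      applySeries S (applySeries Sinv u) = u ∧
      applySeries Sinv (applySeries S u) = u)
    (k : ℕ → ℕ)
    (D : (r : ℕ) → Fin (k r) → (ℕ → ((X → ℂ) →ₗ[ℂ] (X → ℂ))))
    (hSq : ∀ (u v : ℕ → X → ℂ) (m : ℕ),
      applySeries S (starMul C (starSeries u) v) m =
        ∑ p ∈ Finset.HasAntidiagonal.antidiagonal m, ∑ I : Fin (k p.1),
          seriesMul (starSeries (applySeries (D p.1 I) u))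
            (applySeries (D p.1 I) v) p.2)
    (ω₀ : (X → ℂ) →ₗ[ℂ] ℂ)
    (hω₀ : ∀ f : X → ℂ, (ω₀ (star f * f)).im = 0 ∧ 0 ≤ (ω₀ (star f * f)).re) :
    ∀ f : ℕ → X → ℂ,
      SeriesNonneg fun r =>
        ω₀ (applySeries S
          (starMul C (applySeries Sinv (starSeries f))
            (applySeries Sinv f)) r) := by
  intro f
  classical
  -- `applySeries S` commutes with coefficientwise conjugation
  have hstarS : ∀ w : ℕ → X → ℂ,
      applySeries S (starSeries w) = starSeries (applySeries S w) := by
    intro w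
    funext r
    show ∑ p ∈ Finset.HasAntidiagonal.antidiagonal r, S p.1 (star (w p.2))
        = star (∑ p ∈ Finset.HasAntidiagonal.antidiagonal r, S p.1 (w p.2))
    rw [star_sum]
    exact Finset.sum_congr rfl fun p _ => hSstar p.1 (w p.2)
  have hinj : Function.Injective (applySeries S (X := X)) := by
    intro x y hxy
    have hx := (hinv x).2
    have hy := (hinv y).2
    rw [← hx, ← hy, hxy]
  set u := applySeries Sinv f with hu
  have hsu : applySeries Sinv (starSeries f) = starSeries u := by
    apply hinj
    rw [(hinv (starSeries f)).1, hstarS, hu, (hinv f).1]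
  rw [hsu]
  -- Gram coefficients
  set b : (r : ℕ) → Fin (k r) → ℕ → ℂ := fun r I s =>
    ∑ q ∈ Finset.HasAntidiagonal.antidiagonal s,
      ω₀ (star (applySeries (D r I) u q.1) * applySeries (D r I) u q.2) with hbdef
  apply combine _ k b
  · intro m
    rw [hSq u u m, map_sum]
    apply Finset.sum_congr rfl
    intro p _
    rw [map_sum]
    apply Finset.sum_congr rfl
    intro I _
    show ω₀ (∑ q ∈ Finset.HasAntidiagonal.antidiagonal p.2,
        starSeries (applySeries (D p.1 I) u) q.1 * applySeries (D p.1 I) u q.2) = _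
    rw [map_sum]
    rfl
  · intro r I s
    exact gram_im ω₀ hω₀ (applySeries (D r I) u) s
  · intro r I
    exact gram_re ω₀ hω₀ (applySeries (D r I) u)

end
end

section
/- The linear map on ℝ⁴ defined by the 4×4 matrix Φ_t (with entries built from cos(νt), cos(ν_κ t), sin(νt)/(mν), sin(ν_κ t)/(mν_κ), −mν sin(νt), −mν_κ sin(ν_κ t) as in the coupled-oscillator flow) is the Hamiltonian flow of H = (p_S² + p_B²)/(2m) + (mν²/2)(q_S² + q_B²) + (κ/2)(q_S − q_B)²: it is a one-parameter group of symplectomorphisms satisfying (d/dt)Φ_t = X_H ∘ Φ_t with Φ_0 = id, where ν_κ = √(ν² + 2κ/m). -/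
noncomputable section

/-- The explicit linear flow of two linearly coupled harmonic oscillators on
`ℝ⁴` with coordinates `(q_S, p_S, q_B, p_B)`. -/
def coupledFlow (m ν νκ : ℝ) (t : ℝ) (x : ℝ × ℝ × ℝ × ℝ) : ℝ × ℝ × ℝ × ℝ :=
  let qS := x.1; let pS := x.2.1; let qB := x.2.2.1; let pB := x.2.2.2
  let c1 := Real.cos (ν * t); let c2 := Real.cos (νκ * t)
  let s1 := Real.sin (ν * t); let s2 := Real.sin (νκ * t)
  (((c1 + c2) * qS + (s1 / (m * ν) + s2 / (m * νκ)) * pS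
      + (c1 - c2) * qB + (s1 / (m * ν) - s2 / (m * νκ)) * pB) / 2,
   ((-(m * (ν * s1 + νκ * s2))) * qS + (c1 + c2) * pS
      + (-(m * (ν * s1 - νκ * s2))) * qB + (c1 - c2) * pB) / 2,
   ((c1 - c2) * qS + (s1 / (m * ν) - s2 / (m * νκ)) * pS
      + (c1 + c2) * qB + (s1 / (m * ν) + s2 / (m * νκ)) * pB) / 2,
   ((-(m * (ν * s1 - νκ * s2))) * qS + (c1 - c2) * pS
      + (-(m * (ν * s1 + νκ * s2))) * qB + (c1 + c2) * pB) / 2)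

/-- The Hamiltonian vector field of
`H = (p_S² + p_B²)/(2m) + (mν²/2)(q_S² + q_B²) + (κ/2)(q_S − q_B)²`. -/
def XH (m ν κ : ℝ) (x : ℝ × ℝ × ℝ × ℝ) : ℝ × ℝ × ℝ × ℝ :=
  (x.2.1 / m,
   -(m * ν ^ 2 * x.1) - κ * (x.1 - x.2.2.1),
   x.2.2.2 / m,
   -(m * ν ^ 2 * x.2.2.1) + κ * (x.1 - x.2.2.1))

/-- The standard symplectic form on `ℝ⁴`. -/
def symp (u v : ℝ × ℝ × ℝ × ℝ) : ℝ :=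
  u.1 * v.2.1 - u.2.1 * v.1 + u.2.2.1 * v.2.2.2 - u.2.2.2 * v.2.2.1

set_option maxHeartbeats 1000000

private lemma deriv_combo (ν νκ t A B C D : ℝ) :
    HasDerivAt (fun u => A * Real.cos (ν * u) + B * Real.cos (νκ * u)
        + C * Real.sin (ν * u) + D * Real.sin (νκ * u))
      (A * (-Real.sin (ν * t) * ν) + B * (-Real.sin (νκ * t) * νκ)
        + C * (Real.cos (ν * t) * ν) + D * (Real.cos (νκ * t) * νκ)) t := by
  have hc1 : HasDerivAt (fun u => Real.cos (ν * u)) (-Real.sin (ν * t) * ν) t := by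
    simpa [Function.comp_def] using (Real.hasDerivAt_cos (ν * t)).comp t ((hasDerivAt_id t).const_mul ν)
  have hc2 : HasDerivAt (fun u => Real.cos (νκ * u)) (-Real.sin (νκ * t) * νκ) t := by
    simpa [Function.comp_def] using (Real.hasDerivAt_cos (νκ * t)).comp t ((hasDerivAt_id t).const_mul νκ)
  have hs1 : HasDerivAt (fun u => Real.sin (ν * u)) (Real.cos (ν * t) * ν) t := by
    simpa [Function.comp_def] using (Real.hasDerivAt_sin (ν * t)).comp t ((hasDerivAt_id t).const_mul ν)
  have hs2 : HasDerivAt (fun u => Real.sin (νκ * u)) (Real.cos (νκ * t) * νκ) t := by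
    simpa [Function.comp_def] using (Real.hasDerivAt_sin (νκ * t)).comp t ((hasDerivAt_id t).const_mul νκ)
  exact (((hc1.const_mul A).add (hc2.const_mul B)).add (hs1.const_mul C)).add (hs2.const_mul D)

/-- The explicit linear map `Φ_t = coupledFlow` is the
Hamiltonian flow of the coupled-oscillator Hamiltonian: it is a one-parameter
group of symplectomorphisms satisfying `(d/dt) Φ_t = X_H ∘ Φ_t` with
`Φ_0 = id`, where `ν_κ = √(ν² + 2κ/m)`. -/
theorem coupledFlow_is_hamiltonian_flow (m ν κ νκ : ℝ)
    (hm : 0 < m) (hν : 0 < ν) (hκ : 0 < κ) (hνκpos : 0 < νκ)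
    (hνκ : νκ ^ 2 = ν ^ 2 + 2 * κ / m) :
    coupledFlow m ν νκ 0 = id ∧
    (∀ s t : ℝ, coupledFlow m ν νκ (s + t) =
      coupledFlow m ν νκ s ∘ coupledFlow m ν νκ t) ∧
    (∀ (t : ℝ) (x : ℝ × ℝ × ℝ × ℝ),
      HasDerivAt (fun u => coupledFlow m ν νκ u x)
        (XH m ν κ (coupledFlow m ν νκ t x)) t) ∧
    (∀ (t : ℝ) (u v : ℝ × ℝ × ℝ × ℝ),
      symp (coupledFlow m ν νκ t u) (coupledFlow m ν νκ t v) = symp u v) := by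
  have hm' := hm.ne'
  have hν' := hν.ne'
  have hk' := hνκpos.ne'
  have hmn : m * ν ≠ 0 := mul_ne_zero hm' hν'
  have hmk : m * νκ ≠ 0 := mul_ne_zero hm' hk'
  have hκeq : κ = m * (νκ ^ 2 - ν ^ 2) / 2 := by
    field_simp [hνκ]; rw [hνκ]; field_simp; ring
  refine ⟨?_, ?_, ?_, ?_⟩
  · funext x
    obtain ⟨qS, pS, qB, pB⟩ := x
    simp [coupledFlow]
    norm_num
  · intro s t
    funext x
    obtain ⟨qS, pS, qB, pB⟩ := x
    simp only [coupledFlow, Function.comp_apply, mul_add, Real.cos_add, Real.sin_add,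
      Prod.mk.injEq]
    refine ⟨?_, ?_, ?_, ?_⟩ <;> (field_simp; ring)
  · intro t x
    obtain ⟨qS, pS, qB, pB⟩ := x
    simp only [coupledFlow, XH]
    refine HasDerivAt.prodMk ?_ (HasDerivAt.prodMk ?_ (HasDerivAt.prodMk ?_ ?_))
    · have h := deriv_combo ν νκ t ((qS + qB) / 2) ((qS - qB) / 2)
        ((pS + pB) / (2 * (m * ν))) ((pS - pB) / (2 * (m * νκ)))
      convert h using 1
      · rfl
      · rfl
      · funext u; ring
      · field_simp; ring
    · have h := deriv_combo ν νκ t ((pS + pB) / 2) ((pS - pB) / 2)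
        (-(m * ν * (qS + qB)) / 2) (-(m * νκ * (qS - qB)) / 2)
      convert h using 1
      · rfl
      · rfl
      · funext u; ring
      · rw [hκeq]; field_simp; ring
    · have h := deriv_combo ν νκ t ((qS + qB) / 2) (-(qS - qB) / 2)
        ((pS + pB) / (2 * (m * ν))) (-(pS - pB) / (2 * (m * νκ)))
      convert h using 1
      · rfl
      · rfl
      · funext u; ring
      · field_simp; ring
    · have h := deriv_combo ν νκ t ((pS + pB) / 2) (-(pS - pB) / 2)
        (-(m * ν * (qS + qB)) / 2) (m * νκ * (qS - qB) / 2)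
      convert h using 1
      · rfl
      · rfl
      · funext u; ring
      · rw [hκeq]; field_simp; ring
  · intro t u v
    obtain ⟨a1, a2, a3, a4⟩ := u
    obtain ⟨b1, b2, b3, b4⟩ := v
    have h1 := Real.sin_sq_add_cos_sq (ν * t)
    have h2 := Real.sin_sq_add_cos_sq (νκ * t)
    simp only [symp, coupledFlow]
    set A := Real.sin (ν * t) / (m * ν) with hA
    set B := Real.sin (νκ * t) / (m * νκ) with hB
    have e1 : Real.sin (ν * t) = m * ν * A := by rw [hA]; field_simp
    have e2 : Real.sin (νκ * t) = m * νκ * B := by rw [hB]; field_simp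
    rw [e1] at h1
    rw [e2] at h2
    rw [e1, e2]
    linear_combination (((a1 + a3) * (b2 + b4) - (a2 + a4) * (b1 + b3)) / 2) * h1 +
      (((a1 - a3) * (b2 - b4) - (a2 - a4) * (b1 - b3)) / 2) * h2

end
end
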